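/- arXiv:2203.06423 — 2 statements merged into one kernel-verified Lean document; each statement's English description precedes it below -/
import Mathlib

section
/- Let G be a ((K1 ∪ K2) + Kp)-free graph with ω(G) ≥ p+2, p ≥ 1, with maximum clique A = {v1,...,vω} and sets U_k = {v_k} ∪ I_k where I_k is the set of vertices outside A adjacent to all of A except v_k. If x is a vertex belonging to some C_{i,j} (i.e., x is outside A and outside all I_k), then x has neighbors in at most p−1 of the sets U_1,...,U_ω. -/
/-!
For every block `U_k` met by `x` pick a neighbour `u_k ∈ U_k` of `x`. Distinct blocks are
completely joined: nonadjacent `u ∈ I_k`, `u' ∈ I_l` would induce `K₁ ∪ K₂` together with `v_k`,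
joined to `p` vertices of `A \ {v_k, v_l}`. Hence the `u_k` form a clique inside `N(x)`.
If two blocks `U_i, U_j` are not met, then `v_i, v_j` are non-neighbours of `x` and
`{x} ∪ {v_i v_j}` joined to the `u_k` is forbidden, so fewer than `p` blocks are met. Otherwise
almost all blocks are met, and since `x` misses two vertices of `A`, some met block has `v_k ≁ x`;
then `u_k ∈ I_k`, and `{v_k} ∪ {x u_k}` joined to the other `u_l` is forbidden.
-/

open SimpleGraph

/-- The join of two graphs: all cross edges present. -/
def joinG {α β : Type*} (G : SimpleGraph α) (H : SimpleGraph β) : SimpleGraph (α ⊕ β) :=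
  SimpleGraph.fromRel (fun x y => match x, y with
    | Sum.inl a, Sum.inl b => G.Adj a b
    | Sum.inr a, Sum.inr b => H.Adj a b
    | Sum.inl _, Sum.inr _ => True
    | _, _ => False)

/-- The graph `P₃ ∪ P₂`: disjoint union of a path on 3 vertices and an edge. -/
def P3P2 : SimpleGraph (Fin 3 ⊕ Fin 2) := pathGraph 3 ⊕g pathGraph 2

/-- The graph `K₁ ∪ K₂`: disjoint union of a vertex and an edge. -/
def K1K2 : SimpleGraph (Fin 1 ⊕ Fin 2) := (⊥ : SimpleGraph (Fin 1)) ⊕g (⊤ : SimpleGraph (Fin 2))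

/-- The graph `(K₁ ∪ K₂) + Kₚ`: join of `K₁ ∪ K₂` with a complete graph on `p` vertices. -/
def K1K2Kp (p : ℕ) : SimpleGraph ((Fin 1 ⊕ Fin 2) ⊕ Fin p) := joinG K1K2 (⊤ : SimpleGraph (Fin p))

/-- The graph `2K₁ + Kₚ`: join of two isolated vertices with a complete graph on `p` vertices. -/
def twoK1Kp (p : ℕ) : SimpleGraph (Fin 2 ⊕ Fin p) :=
  joinG (⊥ : SimpleGraph (Fin 2)) (⊤ : SimpleGraph (Fin p))

/-- The HVN graph: `(K₁ ∪ K₂) + K₂`. -/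
def HVN : SimpleGraph ((Fin 1 ⊕ Fin 2) ⊕ Fin 2) := K1K2Kp 2

/-- The diamond: `2K₁ + K₂`, i.e. `K₄` minus an edge. -/
def diamond : SimpleGraph (Fin 2 ⊕ Fin 2) := twoK1Kp 2

/-- The paw: `(K₁ ∪ K₂) + K₁`. -/
def paw : SimpleGraph ((Fin 1 ⊕ Fin 2) ⊕ Fin 1) := K1K2Kp 1

/-- `G` is `H`-free if it has no induced subgraph isomorphic to `H`,
i.e. there is no graph embedding of `H` into `G`. -/
def Free {α β : Type*} (H : SimpleGraph α) (G : SimpleGraph β) : Prop :=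
  ¬ Nonempty (H ↪g G)

section Join

variable {α β γ : Type*} {H : SimpleGraph α} {K : SimpleGraph β} {G : SimpleGraph γ}

@[simp] lemma joinG_adj_inl_inl {a a' : α} : (joinG H K).Adj (.inl a) (.inl a') ↔ H.Adj a a' := by
  simp only [joinG, fromRel_adj, ne_eq, Sum.inl.injEq]
  exact ⟨fun h => h.2.elim id .symm, fun h => ⟨h.ne, .inl h⟩⟩

@[simp] lemma joinG_adj_inr_inr {b b' : β} : (joinG H K).Adj (.inr b) (.inr b') ↔ K.Adj b b' := by
  simp only [joinG, fromRel_adj, ne_eq, Sum.inr.injEq]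
  exact ⟨fun h => h.2.elim id .symm, fun h => ⟨h.ne, .inl h⟩⟩

@[simp] lemma joinG_adj_inl_inr {a : α} {b : β} : (joinG H K).Adj (.inl a) (.inr b) := by
  simp [joinG]

@[simp] lemma joinG_adj_inr_inl {a : α} {b : β} : (joinG H K).Adj (.inr b) (.inl a) := by
  simp [joinG]

namespace SimpleGraph.Embedding

def join (f : H ↪g G) (g : K ↪g G) (hfg : ∀ a b, G.Adj (f a) (g b)) : joinG H K ↪g G where
  toFun := Sum.elim f g
  inj' := by
    rintro (a | b) (a' | b') h
    all_goals simp only [Sum.elim_inl, Sum.elim_inr] at h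
    · rw [f.injective h]
    · exact absurd h (hfg a b').ne
    · exact absurd h.symm (hfg a' b).ne
    · rw [g.injective h]
  map_rel_iff' {x y} := by
    change G.Adj (Sum.elim f g x) (Sum.elim f g y) ↔ _
    rcases x with a | b <;> rcases y with a' | b' <;> simp [hfg, (hfg _ _).symm]

def k1k2 {a b c : γ} (hab : a ≠ b) (hac : a ≠ c) (hnab : ¬ G.Adj a b) (hnac : ¬ G.Adj a c)
    (hbc : G.Adj b c) : K1K2 ↪g G where
  toFun := Sum.elim (fun _ => a) ![b, c]
  inj' := by
    rintro (i | i) (j | j) h <;> fin_cases i <;> (try fin_cases j) <;>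
      simp_all [hbc.ne, hbc.ne', eq_comm]
  map_rel_iff' {x y} := by
    change G.Adj (Sum.elim _ _ x) (Sum.elim _ _ y) ↔ _
    rcases x with i | i <;> rcases y with j | j <;> fin_cases i <;> (try fin_cases j) <;>
      simp [K1K2, hnab, hnac, hbc, hbc.symm, G.adj_comm _ a]

def topOfPairwise {f : α → γ} (hf : Pairwise fun i j => G.Adj (f i) (f j)) :
    (⊤ : SimpleGraph α) ↪g G :=
  Copy.topEmbedding ⟨⟨f, fun h => hf h⟩, fun _ _ hij => by_contra fun hne => (hf hne).ne hij⟩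

end SimpleGraph.Embedding

end Join

theorem Free.card_lt_of_pairwise_adj {ι V : Type*} {G : SimpleGraph V} {p : ℕ}
    (hfree : _root_.Free (K1K2Kp p) G) {a b c : V} (hab : a ≠ b) (hac : a ≠ c)
    (hnab : ¬ G.Adj a b) (hnac : ¬ G.Adj a c) (hbc : G.Adj b c)
    {T : Finset ι} {w : ι → V} (hT : (T : Set ι).Pairwise fun i j => G.Adj (w i) (w j))
    (hcommon : ∀ t ∈ T, G.Adj a (w t) ∧ G.Adj b (w t) ∧ G.Adj c (w t)) : T.card < p := by
  by_contra! hp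
  let e : Fin p ↪ T := (Fin.castLEEmb hp).trans T.equivFin.symm.toEmbedding
  have hclique : Pairwise fun s t => G.Adj (w (e s)) (w (e t)) :=
    fun s t hst => hT (e s).2 (e t).2 (Subtype.coe_injective.ne (e.injective.ne hst))
  refine hfree ⟨(Embedding.k1k2 hab hac hnab hnac hbc).join (Embedding.topOfPairwise hclique) ?_⟩
  rintro (_ | i) t
  · exact (hcommon _ (e t).2).1
  · fin_cases i
    exacts [(hcommon _ (e t).2).2.1, (hcommon _ (e t).2).2.2]

namespace SimpleGraph

variable {ι V : Type*} {G : SimpleGraph V} {v : ι → V}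

/-- The paper's `I_k`. -/
def almostNbrs (G : SimpleGraph V) (v : ι → V) (k : ι) : Set V :=
  {y | y ∉ Set.range v ∧ ∀ i, i ≠ k → G.Adj y (v i)}

/-- The paper's `U_k = {v_k} ∪ I_k`. -/
def block (G : SimpleGraph V) (v : ι → V) (k : ι) : Set V :=
  insert (v k) (G.almostNbrs v k)

theorem maximal_isClique_range [Finite V] [Fintype ι] (hv : Function.Injective v)
    (hA : G.IsClique (Set.range v)) (hcard : G.cliqueNum ≤ Fintype.card ι) :
    Maximal G.IsClique (Set.range v) := by
  classical
  have hmax : G.IsMaximumClique (Finset.univ.image v) := by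
    refine ⟨by simpa using hA, fun t ht => ?_⟩
    rw [Finset.card_image_of_injective _ hv, Finset.card_univ]
    exact (ht.card_le_cliqueNum).trans hcard
  simpa using hmax.isMaximalClique

theorem exists_not_adj_of_maximal (hA : Maximal G.IsClique (Set.range v)) {w : V}
    (hw : w ∉ Set.range v) : ∃ i, ¬ G.Adj w (v i) := by
  by_contra! hadj
  have hins : G.IsClique (insert w (Set.range v)) :=
    hA.1.insert fun _ ⟨i, hi⟩ _ => hi ▸ hadj i
  exact hw (hA.2 hins (Set.subset_insert _ _) (Set.mem_insert _ _))

theorem not_adj_of_mem_almostNbrs (hA : Maximal G.IsClique (Set.range v)) {k : ι} {y : V}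
    (hy : y ∈ G.almostNbrs v k) : ¬ G.Adj y (v k) := by
  intro hyk
  obtain ⟨i, hi⟩ := exists_not_adj_of_maximal hA hy.1
  by_cases hik : i = k
  · exact hi (hik ▸ hyk)
  · exact hi (hy.2 i hik)

theorem pairwise_adj_of_isClique_range (hv : Function.Injective v)
    (hA : G.IsClique (Set.range v)) : Pairwise fun i j => G.Adj (v i) (v j) :=
  fun i j hij => hA ⟨i, rfl⟩ ⟨j, rfl⟩ (hv.ne hij)

theorem adj_of_mem_block (hv : Function.Injective v) (hA : G.IsClique (Set.range v))
    {k m : ι} {u : V} (hu : u ∈ G.block v k) (hmk : m ≠ k) : G.Adj u (v m) := by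
  rcases hu with rfl | hu
  · exact pairwise_adj_of_isClique_range hv hA hmk.symm
  · exact hu.2 m hmk

theorem adj_of_mem_block_of_mem_block [Fintype ι] {p : ℕ} (hfree : _root_.Free (K1K2Kp p) G)
    (hv : Function.Injective v) (hA : Maximal G.IsClique (Set.range v))
    (hp : p + 2 ≤ Fintype.card ι) {k l : ι} (hkl : k ≠ l) {u u' : V}
    (hu : u ∈ G.block v k) (hu' : u' ∈ G.block v l) : G.Adj u u' := by
  classical
  have hAv := pairwise_adj_of_isClique_range hv hA.1
  rcases hu with rfl | hu
  · exact (adj_of_mem_block hv hA.1 hu' hkl).symm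
  rcases hu' with rfl | hu'
  · exact adj_of_mem_block hv hA.1 (Set.mem_insert_of_mem _ hu) hkl.symm
  by_contra hnadj
  have hcard : p ≤ ({k, l}ᶜ : Finset ι).card := by
    rw [Finset.card_compl, Finset.card_pair hkl]
    omega
  -- `u`, `u'`, `v k` induce `K₁ ∪ K₂`, completely joined to the clique `A \ {v k, v l}`
  refine (hfree.card_lt_of_pairwise_adj (c := v k) ?_ (fun h => hu.1 ⟨k, h.symm⟩) hnadj
    (not_adj_of_mem_almostNbrs hA hu) (hu'.2 k hkl) (fun i _ j _ hij => hAv hij) ?_).not_ge hcard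
  · exact fun h => not_adj_of_mem_almostNbrs hA hu' (h ▸ hu.2 l hkl.symm)
  · intro t ht
    simp only [Finset.mem_compl, Finset.mem_insert, Finset.mem_singleton, not_or] at ht
    exact ⟨hu.2 t ht.1, hu'.2 t ht.2, hAv (Ne.symm ht.1)⟩

theorem pairwise_adj_of_mem_block [Fintype ι] {p : ℕ} (hfree : _root_.Free (K1K2Kp p) G)
    (hv : Function.Injective v) (hA : Maximal G.IsClique (Set.range v))
    (hp : p + 2 ≤ Fintype.card ι) {S : Set ι} {u : ι → V} (hu : ∀ k ∈ S, u k ∈ G.block v k) :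
    S.Pairwise fun k l => G.Adj (u k) (u l) :=
  fun k hk l hl hkl => adj_of_mem_block_of_mem_block hfree hv hA hp hkl (hu k hk) (hu l hl)

section NbrsOfBlocks

variable [Fintype ι] {p : ℕ} {x : V} {S : Finset ι} {u : ι → V}

theorem card_lt_of_not_adj_of_notMem (hfree : _root_.Free (K1K2Kp p) G)
    (hv : Function.Injective v) (hA : Maximal G.IsClique (Set.range v))
    (hp : p + 2 ≤ Fintype.card ι) (hx : x ∉ Set.range v)
    (hu : ∀ k ∈ S, u k ∈ G.block v k ∧ G.Adj x (u k)) {i j : ι} (hij : i ≠ j)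
    (hi : i ∉ S) (hj : j ∉ S) (hxi : ¬ G.Adj x (v i)) (hxj : ¬ G.Adj x (v j)) : S.card < p := by
  refine hfree.card_lt_of_pairwise_adj (fun h => hx ⟨i, h.symm⟩) (fun h => hx ⟨j, h.symm⟩)
    hxi hxj (pairwise_adj_of_isClique_range hv hA.1 hij)
    (pairwise_adj_of_mem_block hfree hv hA hp fun k hk => (hu k hk).1) fun t ht => ?_
  have hti : t ≠ i := fun h => hi (h ▸ ht)
  have htj : t ≠ j := fun h => hj (h ▸ ht)
  exact ⟨(hu t ht).2, (adj_of_mem_block hv hA.1 (hu t ht).1 hti.symm).symm,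
    (adj_of_mem_block hv hA.1 (hu t ht).1 htj.symm).symm⟩

theorem card_le_of_not_adj_of_mem (hfree : _root_.Free (K1K2Kp p) G)
    (hv : Function.Injective v) (hA : Maximal G.IsClique (Set.range v))
    (hp : p + 2 ≤ Fintype.card ι) (hx : x ∉ Set.range v)
    (hu : ∀ k ∈ S, u k ∈ G.block v k ∧ G.Adj x (u k)) {k : ι} (hk : k ∈ S)
    (hxk : ¬ G.Adj x (v k)) : S.card ≤ p := by
  classical
  obtain ⟨huk, hxuk⟩ := hu k hk
  have hukI : u k ∈ G.almostNbrs v k :=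
    (Set.mem_insert_iff.1 huk).resolve_left fun h => hxk (h ▸ hxuk)
  have hpair := pairwise_adj_of_mem_block hfree hv hA hp fun k hk => (hu k hk).1
  have hlt : (S.erase k).card < p := by
    refine hfree.card_lt_of_pairwise_adj (fun h => hx ⟨k, h⟩) (fun h => hukI.1 ⟨k, h⟩)
      (fun h => hxk h.symm) (fun h => not_adj_of_mem_almostNbrs hA hukI h.symm) hxuk
      (hpair.mono (Finset.erase_subset k S)) fun t ht => ?_
    obtain ⟨htk, htS⟩ := Finset.mem_erase.1 ht
    exact ⟨(adj_of_mem_block hv hA.1 (hu t htS).1 htk.symm).symm, (hu t htS).2,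
      hpair hk htS htk.symm⟩
  have := Finset.card_erase_add_one hk
  omega

theorem ncard_setOf_exists_adj_block_lt (hfree : _root_.Free (K1K2Kp p) G)
    (hv : Function.Injective v) (hA : Maximal G.IsClique (Set.range v))
    (hp : p + 2 ≤ Fintype.card ι) (hx : x ∉ Set.range v)
    (hxI : ∀ k, ¬ ∀ i, i ≠ k → G.Adj x (v i)) :
    {k | ∃ u ∈ G.block v k, G.Adj x u}.ncard < p := by
  classical
  set S := Finset.univ.filter fun k => ∃ u ∈ G.block v k, G.Adj x u
  rw [show {k | ∃ u ∈ G.block v k, G.Adj x u} = ↑S by ext; simp [S], Set.ncard_coe_finset]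
  have : Nonempty V := ⟨x⟩
  choose! u hu using fun k (hk : k ∈ S) => (Finset.mem_filter.1 hk).2
  have hnbr : ∀ k, G.Adj x (v k) → k ∈ S := fun k hxk =>
    Finset.mem_filter.2 ⟨Finset.mem_univ k, v k, Set.mem_insert _ _, hxk⟩
  by_cases hout : 1 < Sᶜ.card
  · obtain ⟨i, hi, j, hj, hij⟩ := Finset.one_lt_card.1 hout
    rw [Finset.mem_compl] at hi hj
    exact card_lt_of_not_adj_of_notMem hfree hv hA hp hx hu hij hi hj (mt (hnbr i) hi)
      (mt (hnbr j) hj)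
  · -- `x` misses two vertices of `A`, and all but at most one index lies in `S`
    obtain ⟨i, hxi⟩ := exists_not_adj_of_maximal hA hx
    obtain ⟨j, hji, hxj⟩ : ∃ j, j ≠ i ∧ ¬ G.Adj x (v j) := by simpa using hxI i
    obtain ⟨k, hk, hxk⟩ : ∃ k ∈ S, ¬ G.Adj x (v k) := by
      by_contra! h
      exact hout (Finset.one_lt_card.2 ⟨i, Finset.mem_compl.2 (mt (h i) hxi),
        j, Finset.mem_compl.2 (mt (h j) hxj), hji.symm⟩)
    have := card_le_of_not_adj_of_mem hfree hv hA hp hx hu hk hxk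
    have := Finset.card_compl S
    omega

end NbrsOfBlocks

end SimpleGraph

theorem stmt_3_general {V : Type*} [Fintype V] (G : SimpleGraph V) (p : ℕ)
    (hfree : _root_.Free (K1K2Kp p) G) (hω : p + 2 ≤ G.cliqueNum)
    (v : Fin G.cliqueNum → V) (hinj : Function.Injective v)
    (hclique : G.IsClique (Set.range v))
    (x : V) (hxA : x ∉ Set.range v)
    (hxI : ∀ k : Fin G.cliqueNum, ¬ ∀ i, i ≠ k → G.Adj x (v i)) :
    {k : Fin G.cliqueNum |
      ∃ u ∈ insert (v k) {y | y ∉ Set.range v ∧ ∀ i, i ≠ k → G.Adj y (v i)},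
        G.Adj x u}.ncard ≤ p - 1 := by
  have hcard : Fintype.card (Fin G.cliqueNum) = G.cliqueNum := Fintype.card_fin _
  have hA := maximal_isClique_range hinj hclique hcard.ge
  exact Nat.le_sub_one_of_lt
    (ncard_setOf_exists_adj_block_lt hfree hinj hA (by rwa [hcard]) hxA hxI)

theorem stmt_3 {V : Type*} [Fintype V] (G : SimpleGraph V) (p : ℕ) (hp : 1 ≤ p)
    (hfree : _root_.Free (K1K2Kp p) G) (hω : p + 2 ≤ G.cliqueNum)
    (v : Fin G.cliqueNum → V) (hinj : Function.Injective v)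
    (hclique : G.IsClique (Set.range v))
    (x : V) (hxA : x ∉ Set.range v)
    (hxI : ∀ k : Fin G.cliqueNum, ¬ ∀ i, i ≠ k → G.Adj x (v i)) :
    {k : Fin G.cliqueNum |
      ∃ u ∈ insert (v k) {y | y ∉ Set.range v ∧ ∀ i, i ≠ k → G.Adj y (v i)},
        G.Adj x u}.ncard ≤ p - 1 :=
  stmt_3_general G p hfree hω v hinj hclique x hxA hxI
end

section
/- Let p ≥ 1 and let G be a {P3 ∪ P2, (K1 ∪ K2) + Kp}-free graph with ω(G) ≥ max{3, 3p−1}. With the partition V(G) = V1 ∪ V2 where V1 = A ∪ ⋃_k I_k and V2 = ⋃ C_{i,j}, the induced subgraph on V2 is P3-free. -/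
/-!
A vertex of `V₂` misses at least two vertices of the maximum clique `A`; together with any `p`
of its neighbours in `A` they would induce `(K₁ ∪ K₂) + Kₚ`, so it has fewer than `p` neighbours
in `A`. Hence the three vertices of an induced `P₃` in `V₂` have at least `ω + 3 - 3p ≥ 2` common
non-neighbours in `A`, and two of them form an edge which, together with the `P₃`, induces
`P₃ ∪ P₂`.
-/

open SimpleGraph

namespace SimpleGraph

variable {α β V ι : Type*} {H : SimpleGraph α} {H' : SimpleGraph β} {G : SimpleGraph V}

@[simp] lemma joinG_adj_inl_inl {a a' : α} : (joinG H H').Adj (.inl a) (.inl a') ↔ H.Adj a a' := by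
  simp only [joinG, fromRel_adj, ne_eq, Sum.inl.injEq]
  exact ⟨fun h => h.2.elim id .symm, fun h => ⟨h.ne, .inl h⟩⟩

@[simp] lemma joinG_adj_inr_inr {b b' : β} : (joinG H H').Adj (.inr b) (.inr b') ↔ H'.Adj b b' := by
  simp only [joinG, fromRel_adj, ne_eq, Sum.inr.injEq]
  exact ⟨fun h => h.2.elim id .symm, fun h => ⟨h.ne, .inl h⟩⟩

@[simp] lemma joinG_adj_inl_inr {a : α} {b : β} : (joinG H H').Adj (.inl a) (.inr b) := by
  simp [joinG]

@[simp] lemma joinG_adj_inr_inl {a : α} {b : β} : (joinG H H').Adj (.inr b) (.inl a) := by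
  simp [joinG]

namespace Embedding

def sumElim (f : H ↪g G) (g : H' ↪g G) (hne : ∀ a b, f a ≠ g b)
    (hadj : ∀ a b, ¬ G.Adj (f a) (g b)) : H ⊕g H' ↪g G where
  toFun := Sum.elim f g
  inj' := f.injective.sumElim g.injective hne
  map_rel_iff' := by
    rintro (a | b) (a' | b')
    · simp
    · simpa using hadj a b'
    · simpa [G.adj_comm] using hadj a' b
    · simp

def joinGElim (f : H ↪g G) (g : H' ↪g G) (hadj : ∀ a b, G.Adj (f a) (g b)) :
    joinG H H' ↪g G where
  toFun := Sum.elim f g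
  inj' := f.injective.sumElim g.injective fun a b => (hadj a b).ne
  map_rel_iff' := by
    rintro (a | b) (a' | b')
    · simp
    · simpa using hadj a b'
    · simpa [G.adj_comm] using hadj a' b
    · simp

def botOfSubsingleton [Subsingleton α] (f : α → V) : (⊥ : SimpleGraph α) ↪g G where
  toFun := f
  inj' a a' _ := Subsingleton.elim a a'
  map_rel_iff' {a a'} := by
    rw [Subsingleton.elim a a']
    simp

def topOfIsClique {v : ι → V} (hinj : v.Injective) (hclique : G.IsClique (Set.range v)) :
    (⊤ : SimpleGraph ι) ↪g G where
  toFun := v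
  inj' := hinj
  map_rel_iff' {i j} :=
    ⟨fun h e => h.ne (congrArg v e),
      fun h => hclique (Set.mem_range_self i) (Set.mem_range_self j) (hinj.ne h)⟩

end Embedding

end SimpleGraph

open Finset

theorem Finset.exists_fin_embedding_mem {s : Finset ι} {k : ℕ} (h : k ≤ #s) :
    ∃ g : Fin k ↪ ι, ∀ j, g j ∈ s :=
  ⟨(Fin.castLEEmb h).trans (s.equivFin.symm.toEmbedding.trans (.subtype _)), fun j => by simp⟩

theorem Finset.card_add_card_add_card_le {α : Type*} [Fintype α] [DecidableEq α]
    (A B C : Finset α) : #A + #B + #C ≤ 2 * Fintype.card α + #(A ∩ B ∩ C) := by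
  have hAB := card_inter_add_card_union A B
  have hABC := card_inter_add_card_union (A ∩ B) C
  have := card_le_univ (A ∪ B)
  have := card_le_univ (A ∩ B ∪ C)
  omega

namespace SimpleGraph

variable {V ι : Type*} {G : SimpleGraph V} [Fintype ι] [DecidableRel G.Adj] {v : ι → V}

theorem one_lt_card_not_adj [Nonempty ι] {u : V} (hu : ∀ k, ¬ ∀ i, i ≠ k → G.Adj u (v i)) :
    1 < #{i | ¬ G.Adj u (v i)} := by
  push Not at hu
  obtain ⟨a, -, ha⟩ := hu (Classical.arbitrary ι)
  obtain ⟨b, hba, hb⟩ := hu a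
  exact one_lt_card.2 ⟨a, by simpa using ha, b, by simpa using hb, hba.symm⟩

variable (hinj : v.Injective) (hclique : G.IsClique (Set.range v))
include hinj hclique

theorem card_adj_lt_of_free {p : ℕ} (hf : _root_.Free (K1K2Kp p) G) {u : V}
    (hu : u ∉ Set.range v) (hnon : 1 < #{i | ¬ G.Adj u (v i)}) : #{i | G.Adj u (v i)} < p := by
  by_contra! hp
  obtain ⟨s, hs⟩ := exists_fin_embedding_mem hp
  obtain ⟨c, hc⟩ := exists_fin_embedding_mem hnon
  simp only [mem_filter, mem_univ, true_and] at hs hc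
  let K := Embedding.topOfIsClique hinj hclique
  refine hf ⟨Embedding.joinGElim
    (Embedding.sumElim (Embedding.botOfSubsingleton fun _ => u) (K.comp (Embedding.completeGraph c))
      (fun _ j h => hu ⟨c j, h.symm⟩) fun _ j => hc j)
    (K.comp (Embedding.completeGraph s)) ?_⟩
  rintro (_ | j) i
  · exact hs i
  · exact K.map_adj_iff.2 fun h => hc j (h ▸ hs i)

theorem card_forall_not_adj_lt_of_free (hf : _root_.Free P3P2 G) (φ : pathGraph 3 ↪g G)
    (hφ : ∀ j, φ j ∉ Set.range v) : #{i | ∀ j, ¬ G.Adj (φ j) (v i)} < 2 := by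
  by_contra! h
  obtain ⟨c, hc⟩ := exists_fin_embedding_mem h
  simp only [mem_filter, mem_univ, true_and] at hc
  let K := Embedding.topOfIsClique hinj hclique
  refine hf ?_
  rw [P3P2, pathGraph_two_eq_top]
  exact ⟨Embedding.sumElim φ (K.comp (Embedding.completeGraph c))
    (fun j i h => hφ j ⟨c i, h.symm⟩) fun j i => hc i j⟩

theorem lt_card_not_adj_add_of_free [Nonempty ι] {p : ℕ} (hf : _root_.Free (K1K2Kp p) G) {u : V}
    (hu : u ∉ Set.range v) (hu' : ∀ k, ¬ ∀ i, i ≠ k → G.Adj u (v i)) :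
    Fintype.card ι < #{i | ¬ G.Adj u (v i)} + p := by
  have := card_adj_lt_of_free hinj hclique hf hu (one_lt_card_not_adj hu')
  rw [← card_univ, ← card_filter_add_card_filter_not (fun i => G.Adj u (v i))]
  omega

end SimpleGraph

theorem stmt_5_general {V : Type*} (G : SimpleGraph V) (p : ℕ)
    (hf1 : _root_.Free P3P2 G) (hf2 : _root_.Free (K1K2Kp p) G)
    (hω : max 3 (3 * p - 1) ≤ G.cliqueNum)
    (v : Fin G.cliqueNum → V) (hinj : Function.Injective v)
    (hclique : G.IsClique (Set.range v)) :
    _root_.Free (pathGraph 3)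
      (G.induce {x | x ∉ Set.range v ∧
        ∀ k : Fin G.cliqueNum, ¬ ∀ i, i ≠ k → G.Adj x (v i)}) := by
  classical
  rintro ⟨e⟩
  have : Nonempty (Fin G.cliqueNum) := ⟨⟨0, by omega⟩⟩
  let φ := (Embedding.induce _).comp e
  let N (j : Fin 3) : Finset (Fin G.cliqueNum) := {i | ¬ G.Adj (φ j) (v i)}
  have hN (j : Fin 3) : G.cliqueNum < #(N j) + p :=
    (Fintype.card_fin _).symm.trans_lt <|
      lt_card_not_adj_add_of_free hinj hclique hf2 (e j).2.1 (e j).2.2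
  have hI : #(N 0 ∩ N 1 ∩ N 2) < 2 := by
    refine lt_of_le_of_lt (card_le_card fun i hi => ?_)
      (card_forall_not_adj_lt_of_free hinj hclique hf1 φ fun j => (e j).2.1)
    simp only [N, mem_inter, mem_filter, mem_univ, true_and] at hi ⊢
    intro j
    fin_cases j <;> tauto
  have hcount := card_add_card_add_card_le (N 0) (N 1) (N 2)
  simp only [Fintype.card_fin] at hcount
  have := hN 0
  have := hN 1
  have := hN 2
  omega

theorem stmt_5 {V : Type*} [Fintype V] (G : SimpleGraph V) (p : ℕ) (hp : 1 ≤ p)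
    (hf1 : _root_.Free P3P2 G) (hf2 : _root_.Free (K1K2Kp p) G)
    (hω : max 3 (3 * p - 1) ≤ G.cliqueNum)
    (v : Fin G.cliqueNum → V) (hinj : Function.Injective v)
    (hclique : G.IsClique (Set.range v)) :
    _root_.Free (pathGraph 3)
      (G.induce {x | x ∉ Set.range v ∧
        ∀ k : Fin G.cliqueNum, ¬ ∀ i, i ≠ k → G.Adj x (v i)}) :=
  stmt_5_general G p hf1 hf2 hω v hinj hclique
end
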